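/- Let H be a complex Hilbert space and L a bounded dissipative operator on H (Re⟨x, Lx⟩ ≤ 0 for all x) with ker(L) ≠ H. Define the singular value gap s(L) := inf{ ‖Lx‖ : x ∈ ker(L)^⊥, ‖x‖ = 1 }, and let P_∞ denote the orthogonal projection onto ker(L). If t ≥ 0 is such that ‖exp(tL)x − P_∞ x‖ ≤ e^{−1} ‖x − P_∞ x‖ for all x ∈ H, then t ≥ 1 / (2 s(L)). In particular, the relaxation time of the semigroup exp(tL) is at least 1/(2 s(L)). -/

import Mathlib

/-!
Dissipativity makes `r ↦ ‖exp (r • L) y‖²` nonincreasing, so `exp (r • L)` is a contraction, and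
then the mean value inequality gives `‖exp (t • L) x - x‖ ≤ t ‖L x‖`. For a unit vector
`x ⊥ ker L` we have `P∞ x = 0`, so the relaxation hypothesis reads `‖exp (t • L) x‖ ≤ e⁻¹`,
whence `1/2 < 1 - e⁻¹ ≤ t ‖L x‖`; taking the infimum over such `x` gives `1/2 ≤ t s(L)`.
-/

open NormedSpace

section Semigroup

variable {E : Type*} [NormedAddCommGroup E] [NormedSpace ℂ E] (L : E →L[ℂ] E)

theorem exp_smul_apply_comm (r : ℝ) (x : E) : exp (r • L) (L x) = L (exp (r • L) x) :=
  congr($(((Commute.refl L).smul_right r).exp_right.eq.symm) x)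

variable [CompleteSpace E]

theorem hasDerivAt_exp_smul_apply (x : E) (r : ℝ) :
    HasDerivAt (fun s : ℝ => exp (s • L) x) (exp (r • L) (L x)) r :=
  ((ContinuousLinearMap.apply ℂ E x).restrictScalars ℝ).hasFDerivAt.comp_hasDerivAt r
    (hasDerivAt_exp_smul_const L r)

variable {L}

theorem norm_exp_smul_apply_sub_le (hcontr : ∀ r : ℝ, 0 ≤ r → ∀ y, ‖exp (r • L) y‖ ≤ ‖y‖)
    {t : ℝ} (ht : 0 ≤ t) (x : E) : ‖exp (t • L) x - x‖ ≤ t * ‖L x‖ := by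
  have hmvt := (convex_Icc 0 t).norm_image_sub_le_of_norm_hasDerivWithin_le
    (fun r _ => (hasDerivAt_exp_smul_apply L x r).hasDerivWithinAt)
    (fun r hr => hcontr r hr.1 (L x)) (Set.left_mem_Icc.2 ht) (Set.right_mem_Icc.2 ht)
  simpa [Real.norm_of_nonneg ht, mul_comm] using hmvt

theorem one_sub_mul_norm_le_mul_norm_apply
    (hcontr : ∀ r : ℝ, 0 ≤ r → ∀ y, ‖exp (r • L) y‖ ≤ ‖y‖)
    {t c : ℝ} (ht : 0 ≤ t) {x : E} (hx : ‖exp (t • L) x‖ ≤ c * ‖x‖) :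
    (1 - c) * ‖x‖ ≤ t * ‖L x‖ := by
  have hrev := norm_sub_norm_le x (exp (t • L) x)
  rw [norm_sub_rev] at hrev
  linarith [norm_exp_smul_apply_sub_le hcontr ht x]

end Semigroup

section Dissipative

variable {H : Type*} [NormedAddCommGroup H] [InnerProductSpace ℂ H] [CompleteSpace H]
  {L : H →L[ℂ] H}

theorem norm_exp_smul_apply_le_of_dissipative (hdiss : ∀ x : H, (inner ℂ x (L x) : ℂ).re ≤ 0)
    {s : ℝ} (hs : 0 ≤ s) (y : H) : ‖exp (s • L) y‖ ≤ ‖y‖ := by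
  set u : ℝ → H := fun r => exp (r • L) y
  have hderiv (r : ℝ) : HasDerivAt (fun r => (inner ℂ (u r) (u r) : ℂ).re)
      (2 * (inner ℂ (u r) (L (u r)) : ℂ).re) r := by
    have hu := exp_smul_apply_comm L r y ▸ hasDerivAt_exp_smul_apply L y r
    refine (Complex.reCLM.hasFDerivAt.comp_hasDerivAt r (hu.inner ℂ hu)).congr_deriv ?_
    rw [Complex.reCLM_apply, Complex.add_re, ← inner_conj_symm (L (u r)), Complex.conj_re]
    ring
  have hanti : Antitone (fun r => (inner ℂ (u r) (u r) : ℂ).re) :=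
    antitone_of_hasDerivAt_nonpos hderiv fun r => by
      simp only [Pi.zero_apply]; linarith [hdiss (u r)]
  have hsq : ‖u s‖ ^ 2 ≤ ‖y‖ ^ 2 := by
    simpa [u, ← inner_self_eq_norm_sq (𝕜 := ℂ)] using hanti hs
  exact (sq_le_sq₀ (norm_nonneg _) (norm_nonneg _)).mp hsq

end Dissipative

theorem Submodule.eq_zero_of_mem_of_sub_mem_orthogonal {𝕜 E : Type*} [RCLike 𝕜]
    [NormedAddCommGroup E] [InnerProductSpace 𝕜 E] {K : Submodule 𝕜 E} {x p : E}
    (hx : x ∈ Kᗮ) (hp : p ∈ K) (hxp : x - p ∈ Kᗮ) : p = 0 := by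
  have : p ∈ Kᗮ := by simpa using Kᗮ.sub_mem hx hxp
  exact K.disjoint_def.mp K.orthogonal_disjoint p hp this

theorem div_sInf_le_of_le_mul {S : Set ℝ} {c t : ℝ} (hc : 0 < c) (ht : 0 ≤ t)
    (h : ∀ r ∈ S, c ≤ t * r) : c / sInf S ≤ t := by
  rcases S.eq_empty_or_nonempty with rfl | hS
  · simpa using ht -- junk values: `sInf ∅ = 0` and `c / 0 = 0`
  obtain ⟨r₀, hr₀⟩ := hS
  have htpos : 0 < t := by
    rcases ht.eq_or_lt with rfl | htpos
    · linarith [h r₀ hr₀]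
    · exact htpos
  have hlb : c / t ≤ sInf S :=
    le_csInf ⟨r₀, hr₀⟩ fun r hr => (div_le_iff₀' htpos).mpr (h r hr)
  rw [div_le_iff₀ (lt_of_lt_of_le (by positivity) hlb)]
  rwa [div_le_iff₀' htpos] at hlb

theorem relaxation_time_lower_bound_general
    {H : Type*} [NormedAddCommGroup H] [InnerProductSpace ℂ H] [CompleteSpace H]
    (L : H →L[ℂ] H)
    (hdiss : ∀ x : H, (inner ℂ x (L x) : ℂ).re ≤ 0)
    (Pinf : H →L[ℂ] H)
    (hPmem : ∀ x : H, Pinf x ∈ LinearMap.ker (L : H →ₗ[ℂ] H))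
    (hPorth : ∀ x : H, x - Pinf x ∈ (LinearMap.ker (L : H →ₗ[ℂ] H) : Submodule ℂ H)ᗮ)
    (t : ℝ) (ht : 0 ≤ t)
    (hrelax : ∀ x : H,
      ‖NormedSpace.exp (t • L) x - Pinf x‖ ≤ Real.exp (-1) * ‖x - Pinf x‖) :
    1 / (2 * sInf {r : ℝ | ∃ x : H,
        x ∈ (LinearMap.ker (L : H →ₗ[ℂ] H) : Submodule ℂ H)ᗮ ∧ ‖x‖ = 1 ∧ r = ‖L x‖}) ≤ t := by
  rw [div_mul_eq_div_div]
  refine div_sInf_le_of_le_mul (by norm_num) ht ?_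
  rintro _ ⟨x, hxK, hx1, rfl⟩
  have hP : Pinf x = 0 :=
    Submodule.eq_zero_of_mem_of_sub_mem_orthogonal hxK (hPmem x) (hPorth x)
  have hx : ‖exp (t • L) x‖ ≤ Real.exp (-1) * ‖x‖ := by simpa [hP] using hrelax x
  have hgap := one_sub_mul_norm_le_mul_norm_apply
    (fun _ hr => norm_exp_smul_apply_le_of_dissipative hdiss hr) ht hx
  rw [hx1, mul_one] at hgap
  linarith [Real.exp_neg_one_lt_half]

/-- For a bounded dissipative operator `L` with `ker L ≠ H`, any time `t ≥ 0`
at which the semigroup has uniformly contracted by a factor `e⁻¹` towards equilibrium satisfies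
`t ≥ 1/(2 s(L))`, where `s(L) = inf{‖Lx‖ : x ∈ ker(L)ᗮ, ‖x‖ = 1}` is the singular value gap
and `P∞` the orthogonal projection onto `ker L`.  In particular the relaxation time of
`exp(tL)` is at least `1/(2 s(L))`. -/
theorem relaxation_time_lower_bound
    {H : Type*} [NormedAddCommGroup H] [InnerProductSpace ℂ H] [CompleteSpace H]
    (L : H →L[ℂ] H)
    (hdiss : ∀ x : H, (inner ℂ x (L x) : ℂ).re ≤ 0)
    (hker : (LinearMap.ker (L : H →ₗ[ℂ] H) : Submodule ℂ H) ≠ ⊤)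
    (Pinf : H →L[ℂ] H)
    (hPmem : ∀ x : H, Pinf x ∈ LinearMap.ker (L : H →ₗ[ℂ] H))
    (hPorth : ∀ x : H, x - Pinf x ∈ (LinearMap.ker (L : H →ₗ[ℂ] H) : Submodule ℂ H)ᗮ)
    (t : ℝ) (ht : 0 ≤ t)
    (hrelax : ∀ x : H,
      ‖NormedSpace.exp (t • L) x - Pinf x‖ ≤ Real.exp (-1) * ‖x - Pinf x‖) :
    1 / (2 * sInf {r : ℝ | ∃ x : H,
        x ∈ (LinearMap.ker (L : H →ₗ[ℂ] H) : Submodule ℂ H)ᗮ ∧ ‖x‖ = 1 ∧ r = ‖L x‖}) ≤ t :=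
  relaxation_time_lower_bound_general L hdiss Pinf hPmem hPorth t ht hrelax
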